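/- arXiv:2301.10898 — 4 statements merged into one kernel-verified Lean document; each statement's English description precedes it below -/
import Mathlib

section
/- The quantity η* = -log(γ + (1/(c_H - 1)) e^{-c_L Ψ^{-1}(γ)}) is a strictly decreasing function of γ ∈ (0,1), where Ψ^{-1} is the inverse of the strictly decreasing function Ψ(x) = -(c_L/(1-c_L))e^{-x} + (1/(1-c_L))e^{-c_L x} on [0,∞); moreover η* → +∞ as γ → 0⁺ and η* → -log(c_H/(c_H - 1)) as γ → 1⁻. -/
/-!
Ψ is strictly decreasing on `[0, ∞)` (its derivative is `c_L/(1-c_L) (e^{-x} - e^{-c_L x}) < 0`),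
with `Ψ 0 = 1` and `Ψ > 0`, so its inverse decreases from `+∞` at `0⁺` to `0` at `1⁻`. Hence
`γ + e^{-c_L Ψ⁻¹(γ)}/(c_H - 1)` is positive and strictly increasing (the summand `γ` already
is), tends to `0` as `γ → 0⁺` and to `1 + 1/(c_H - 1) = c_H/(c_H - 1)` as `γ → 1⁻`; taking `-log` gives the claims.
-/

open Real Set Filter Topology

section RightInverse

variable {α β : Type*} [LinearOrder α] [Preorder β] {f : α → β} {g : β → α} {s : Set α}
  {t : Set β}

theorem AntitoneOn.lt_of_lt_apply_of_rightInvOn (hf : AntitoneOn f s) (hg : MapsTo g t s)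
    (hfg : RightInvOn g f t) {x : α} {y : β} (hx : x ∈ s) (hy : y ∈ t) (h : y < f x) :
    x < g y := by
  by_contra! hle
  exact (hfg.eq hy ▸ hf (hg hy) hx hle).not_gt h

theorem AntitoneOn.lt_of_apply_lt_of_rightInvOn (hf : AntitoneOn f s) (hg : MapsTo g t s)
    (hfg : RightInvOn g f t) {x : α} {y : β} (hx : x ∈ s) (hy : y ∈ t) (h : f x < y) :
    g y < x := by
  by_contra! hle
  exact (hfg.eq hy ▸ hf hx (hg hy) hle).not_gt h

theorem AntitoneOn.tendsto_atTop_of_rightInvOn {a : α} {l : Filter β}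
    (hf : AntitoneOn f (Ici a)) (hg : MapsTo g t (Ici a)) (hfg : RightInvOn g f t) (ht : t ∈ l)
    (hlt : ∀ x, a ≤ x → ∀ᶠ y in l, y < f x) : Tendsto g l atTop := by
  refine tendsto_atTop.2 fun M ↦ ?_
  filter_upwards [ht, hlt (max M a) (le_max_right M a)] with y hy hlt
  exact (le_max_left M a).trans
    (hf.lt_of_lt_apply_of_rightInvOn hg hfg (le_max_right M a) hy hlt).le

theorem AntitoneOn.tendsto_nhds_of_rightInvOn [TopologicalSpace α] [OrderTopology α] {a : α}
    {l : Filter β} (hf : AntitoneOn f (Ici a)) (hg : MapsTo g t (Ici a)) (hfg : RightInvOn g f t)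
    (ht : t ∈ l) (hlt : ∀ x, a < x → ∀ᶠ y in l, f x < y) : Tendsto g l (𝓝 a) := by
  refine tendsto_order.2 ⟨fun b hb ↦ ?_, fun b hb ↦ ?_⟩
  · filter_upwards [ht] with y hy
    exact hb.trans_le (hg hy)
  · filter_upwards [ht, hlt b hb] with y hy hlt
    exact hf.lt_of_apply_lt_of_rightInvOn hg hfg hb.le hy hlt

end RightInverse

noncomputable def psi (c x : ℝ) : ℝ :=
  -(c / (1 - c)) * exp (-x) + (1 / (1 - c)) * exp (-c * x)

section Psi

variable {c : ℝ}

theorem psi_zero (hc : c ≠ 1) : psi c 0 = 1 := by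
  have : 1 - c ≠ 0 := sub_ne_zero.2 hc.symm
  simp only [psi, neg_zero, exp_zero, mul_zero]
  field_simp
  ring

theorem psi_eq_div (hc : c ≠ 1) (x : ℝ) :
    psi c x = (exp (-c * x) - c * exp (-x)) / (1 - c) := by
  have : 1 - c ≠ 0 := sub_ne_zero.2 hc.symm
  rw [psi]
  field_simp
  ring

theorem psi_pos (hc : c < 1) {x : ℝ} (hx : 0 ≤ x) : 0 < psi c x := by
  rw [psi_eq_div hc.ne]
  have hexp : exp (-x) ≤ exp (-c * x) := exp_le_exp.2 (by nlinarith)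
  have : c * exp (-x) < exp (-x) := by nlinarith [exp_pos (-x)]
  exact div_pos (by linarith) (by linarith)

theorem hasDerivAt_psi (c x : ℝ) :
    HasDerivAt (psi c) (c / (1 - c) * (exp (-x) - exp (-c * x))) x := by
  have h1 : HasDerivAt (fun x ↦ exp (-x)) (exp (-x) * (-1)) x := (hasDerivAt_neg x).exp
  have h2 : HasDerivAt (fun x ↦ exp (-c * x)) (exp (-c * x) * (-c * 1)) x :=
    ((hasDerivAt_id x).const_mul (-c)).exp
  exact ((h1.const_mul (-(c / (1 - c)))).add (h2.const_mul (1 / (1 - c)))).congr_deriv (by ring)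

theorem psi_strictAntiOn (hc0 : 0 < c) (hc1 : c < 1) : StrictAntiOn (psi c) (Ici 0) := by
  refine strictAntiOn_of_deriv_neg (convex_Ici 0)
    (fun x _ ↦ (hasDerivAt_psi c x).continuousAt.continuousWithinAt) fun x hx ↦ ?_
  rw [interior_Ici, mem_Ioi] at hx
  rw [(hasDerivAt_psi c x).deriv]
  exact mul_neg_of_pos_of_neg (div_pos hc0 (by linarith))
    (sub_neg.2 (exp_lt_exp.2 (by nlinarith)))

theorem psi_lt_one (hc0 : 0 < c) (hc1 : c < 1) {x : ℝ} (hx : 0 < x) : psi c x < 1 :=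
  psi_zero hc1.ne ▸ psi_strictAntiOn hc0 hc1 self_mem_Ici hx.le hx

end Psi

section EtaStar

variable {c k : ℝ} {h : ℝ → ℝ}

theorem strictAntiOn_neg_log_add_exp {s : Set ℝ} (hc : 0 ≤ c) (hk : 0 ≤ k)
    (hh : AntitoneOn h s) (hs : s ⊆ Ioi 0) :
    StrictAntiOn (fun γ ↦ -log (γ + k * exp (-c * h γ))) s := by
  intro a ha b hb hab
  have hexp : exp (-c * h a) ≤ exp (-c * h b) :=
    exp_le_exp.2 (by nlinarith [hh ha hb hab.le])
  have hpos : 0 < a + k * exp (-c * h a) := by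
    have : 0 < a := hs ha
    positivity
  exact neg_lt_neg (log_lt_log hpos (by nlinarith))

theorem tendsto_neg_log_add_exp_atTop (hc : 0 < c) (hk : 0 ≤ k)
    (hh : Tendsto h (𝓝[>] 0) atTop) :
    Tendsto (fun γ ↦ -log (γ + k * exp (-c * h γ))) (𝓝[>] 0) atTop := by
  have hexp : Tendsto (fun γ ↦ exp (-c * h γ)) (𝓝[>] 0) (𝓝 0) :=
    tendsto_exp_comp_nhds_zero.2 (by simpa using hh.const_mul_atTop hc)
  have hsum : Tendsto (fun γ ↦ γ + k * exp (-c * h γ)) (𝓝[>] 0) (𝓝[>] 0) := by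
    refine tendsto_nhdsWithin_of_tendsto_nhds_of_eventually_within _ ?_ ?_
    · simpa using (tendsto_nhdsWithin_of_tendsto_nhds tendsto_id).add (hexp.const_mul k)
    · filter_upwards [self_mem_nhdsWithin] with γ (hγ : 0 < γ)
      exact mem_Ioi.2 (by positivity)
  exact tendsto_neg_atBot_atTop.comp (tendsto_log_nhdsGT_zero.comp hsum)

theorem tendsto_neg_log_add_exp_nhds {l : Filter ℝ} {γ₀ : ℝ} (hl : l ≤ 𝓝 γ₀)
    (hk : γ₀ + k ≠ 0) (hh : Tendsto h l (𝓝 0)) :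
    Tendsto (fun γ ↦ -log (γ + k * exp (-c * h γ))) l (𝓝 (-log (γ₀ + k))) := by
  have hexp : Tendsto (fun γ ↦ exp (-c * h γ)) l (𝓝 1) := by
    simpa using (hh.const_mul (-c)).rexp
  simpa using (((tendsto_id.mono_left hl).add (hexp.const_mul k)).log (by simpa using hk)).neg

end EtaStar

theorem eta_star_monotone_and_limits_general (cL cH : ℝ) (hcL0 : 0 < cL) (hcL1 : cL < 1)
    (hcH : 1 < cH)
    (Ψ Ψinv : ℝ → ℝ)
    (hΨ : ∀ x, Ψ x = -(cL / (1 - cL)) * exp (-x) + (1 / (1 - cL)) * exp (-cL * x))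
    (hinv_right : ∀ γ ∈ Ioc (0 : ℝ) 1, Ψinv γ ∈ Ici (0 : ℝ) ∧ Ψ (Ψinv γ) = γ)
    (η : ℝ → ℝ)
    (hη : ∀ γ, η γ = -Real.log (γ + (1 / (cH - 1)) * exp (-cL * Ψinv γ))) :
    StrictAntiOn η (Ioo 0 1) ∧
    Tendsto η (nhdsWithin 0 (Ioi 0)) atTop ∧
    Tendsto η (nhdsWithin 1 (Iio 1)) (nhds (-Real.log (cH / (cH - 1)))) := by
  obtain rfl : Ψ = psi cL := funext hΨ
  obtain rfl : η = fun γ ↦ -log (γ + (1 / (cH - 1)) * exp (-cL * Ψinv γ)) := funext hη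
  have hanti := (psi_strictAntiOn hcL0 hcL1).antitoneOn
  have hmaps : MapsTo Ψinv (Ioc 0 1) (Ici 0) := fun γ hγ ↦ (hinv_right γ hγ).1
  have hinv : RightInvOn Ψinv (psi cL) (Ioc 0 1) := fun γ hγ ↦ (hinv_right γ hγ).2
  have hk : 0 ≤ 1 / (cH - 1) := by
    have : 0 < cH - 1 := by linarith
    positivity
  refine ⟨?_, ?_, ?_⟩
  · exact strictAntiOn_neg_log_add_exp hcL0.le hk
      ((Function.antitoneOn_of_rightInvOn_of_mapsTo hanti hinv hmaps).mono Ioo_subset_Ioc_self)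
      fun γ hγ ↦ hγ.1
  · refine tendsto_neg_log_add_exp_atTop hcL0 hk
      (hanti.tendsto_atTop_of_rightInvOn hmaps hinv (Ioc_mem_nhdsGT one_pos) fun x hx ↦ ?_)
    exact (eventually_lt_nhds (psi_pos hcL1 hx)).filter_mono nhdsWithin_le_nhds
  · have hlim : cH / (cH - 1) = 1 + 1 / (cH - 1) := by
      field_simp [show cH - 1 ≠ 0 by linarith]
      ring
    rw [hlim]
    refine tendsto_neg_log_add_exp_nhds nhdsWithin_le_nhds (by linarith)
      (hanti.tendsto_nhds_of_rightInvOn hmaps hinv (Ioc_mem_nhdsLT one_pos) fun x hx ↦ ?_)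
    exact (eventually_gt_nhds (psi_lt_one hcL0 hcL1 hx)).filter_mono nhdsWithin_le_nhds

theorem eta_star_monotone_and_limits (cL cH : ℝ) (hcL0 : 0 < cL) (hcL1 : cL < 1)
    (hcH : 1 < cH)
    (Ψ Ψinv : ℝ → ℝ)
    (hΨ : ∀ x, Ψ x = -(cL / (1 - cL)) * exp (-x) + (1 / (1 - cL)) * exp (-cL * x))
    (hinv_left : ∀ x ∈ Ici (0 : ℝ), Ψinv (Ψ x) = x)
    (hinv_right : ∀ γ ∈ Ioc (0 : ℝ) 1, Ψinv γ ∈ Ici (0 : ℝ) ∧ Ψ (Ψinv γ) = γ)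
    (η : ℝ → ℝ)
    (hη : ∀ γ, η γ = -Real.log (γ + (1 / (cH - 1)) * exp (-cL * Ψinv γ))) :
    StrictAntiOn η (Ioo 0 1) ∧
    Tendsto η (nhdsWithin 0 (Ioi 0)) atTop ∧
    Tendsto η (nhdsWithin 1 (Iio 1)) (nhds (-Real.log (cH / (cH - 1)))) :=
  eta_star_monotone_and_limits_general cL cH hcL0 hcL1 hcH Ψ Ψinv hΨ hinv_right η hη
end

section
/- Given 0 < c_L < 1 < c_H and γ ∈ (0,1), set η* - κ* = Ψ^{-1}(γ) and η* = -log(γ + (1/(c_H-1))e^{-c_L Ψ^{-1}(γ)}). Then the piecewise function K defined by K(ξ) = e^{-ξ} + (γ - e^{-η*})e^{-c_H(ξ-η*)} for ξ ≥ η* and K(ξ) = -(c_L/(1-c_L))e^{-(ξ-κ*)} + (1/(1-c_L))e^{-c_L(ξ-κ*)} for κ* ≤ ξ ≤ η* is continuous at η* with value γ, and its left and right derivatives at η* agree. -/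
open Real Set

theorem traveling_wave_C1_matching (cL cH γ : ℝ)
    (hcL0 : 0 < cL) (hcL1 : cL < 1) (hcH : 1 < cH) (hγ0 : 0 < γ) (hγ1 : γ < 1)
    (Ψ : ℝ → ℝ)
    (hΨ : ∀ x, Ψ x = -(cL / (1 - cL)) * exp (-x) + (1 / (1 - cL)) * exp (-cL * x))
    (x : ℝ) (hx0 : 0 ≤ x) (hΨx : Ψ x = γ)   -- x = Ψ⁻¹(γ)
    (η κ : ℝ)
    (hη : η = -Real.log (γ + (1 / (cH - 1)) * exp (-cL * x)))
    (hκ : κ = η - x)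
    (KH KL : ℝ → ℝ)
    (hKH : ∀ ξ, KH ξ = exp (-ξ) + (γ - exp (-η)) * exp (-cH * (ξ - η)))
    (hKL : ∀ ξ, KL ξ = -(cL / (1 - cL)) * exp (-(ξ - κ)) + (1 / (1 - cL)) * exp (-cL * (ξ - κ))) :
    KL η = γ ∧ KH η = γ ∧ deriv KL η = deriv KH η := by
  have hcH1 : (0:ℝ) < cH - 1 := by linarith
  have h1cL : (0:ℝ) < 1 - cL := by linarith
  have hpos : 0 < γ + (1 / (cH - 1)) * exp (-cL * x) := by positivity
  have hexpη : exp (-η) = γ + (1 / (cH - 1)) * exp (-cL * x) := by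
    rw [hη, neg_neg, Real.exp_log hpos]
  have hηκ : η - κ = x := by rw [hκ]; ring
  rw [hΨ] at hΨx
  have hKLη : KL η = γ := by rw [hKL, hηκ]; exact hΨx
  have hKHη : KH η = γ := by
    rw [hKH, sub_self, mul_zero, exp_zero, mul_one]; ring
  refine ⟨hKLη, hKHη, ?_⟩
  have d1 : HasDerivAt (fun ξ : ℝ => -(ξ - κ)) (-1) η :=
    ((hasDerivAt_id η).sub_const κ).neg
  have d2 : HasDerivAt (fun ξ : ℝ => -cL * (ξ - κ)) (-cL * 1) η :=
    ((hasDerivAt_id η).sub_const κ).const_mul (-cL)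
  have dKL : HasDerivAt KL
      (-(cL / (1 - cL)) * (exp (-(η - κ)) * (-1))
        + (1 / (1 - cL)) * (exp (-cL * (η - κ)) * (-cL * 1))) η := by
    have h := ((d1.exp).const_mul (-(cL / (1 - cL)))).add
      ((d2.exp).const_mul (1 / (1 - cL)))
    exact (funext hKL : KL = _) ▸ h
  have d3 : HasDerivAt (fun ξ : ℝ => -ξ) (-1) η := (hasDerivAt_id η).neg
  have d4 : HasDerivAt (fun ξ : ℝ => -cH * (ξ - η)) (-cH * 1) η :=
    ((hasDerivAt_id η).sub_const η).const_mul (-cH)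
  have dKH : HasDerivAt KH
      (exp (-η) * (-1) + (γ - exp (-η)) * (exp (-cH * (η - η)) * (-cH * 1))) η := by
    have h := (d3.exp).add ((d4.exp).const_mul (γ - exp (-η)))
    exact (funext hKH : KH = _) ▸ h
  rw [dKL.deriv, dKH.deriv, hηκ, hexpη, sub_self, mul_zero, exp_zero]
  have hE : -(cL / (1 - cL)) * exp (-x) + (1 / (1 - cL)) * exp (-cL * x) = γ := hΨx
  field_simp at hE ⊢
  nlinarith [hE, exp_pos (-cL * x), exp_pos (-x)]
end

section
/- The free boundary problem for the traveling wave: given 0 < c_L < 1 < c_H and γ ∈ (0,1), there exists a unique triple (K, η*, κ*) with κ* < η*, K ∈ C¹([κ*,∞)), K smooth on [κ*,η*] and on [η*,∞), satisfying K'' + K' + c_H(K'+K) = 0 on (η*,∞), K'' + K' + c_L(K'+K) = 0 on (κ*,η*), K(κ*) = 1, K'(κ*) = 0, K(η*) = γ, and e^{ξ}K(ξ) → 1 as ξ → ∞. -/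
open Real Set Filter

/-- `(K, η, κ)` solves the traveling-wave free boundary problem:
`K'' + K' + c_H (K' + K) = 0` for `ξ > η`, `K'' + K' + c_L (K' + K) = 0` for
`κ < ξ < η`, `K(κ) = 1`, `K'(κ) = 0`, `K(η) = γ`, `K ∈ C¹([κ,∞))`, `K` smooth on
`[κ,η]` and on `[η,∞)`, and `e^ξ K(ξ) → 1` as `ξ → ∞`. -/
def IsTravelingWave (cL cH γ : ℝ) (K : ℝ → ℝ) (η κ : ℝ) : Prop :=
  κ < η ∧
  ContDiffOn ℝ 1 K (Ici κ) ∧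
  ContDiffOn ℝ (⊤ : ℕ∞) K (Icc κ η) ∧
  ContDiffOn ℝ (⊤ : ℕ∞) K (Ici η) ∧
  (∀ ξ ∈ Ioi η, deriv (deriv K) ξ + deriv K ξ + cH * (deriv K ξ + K ξ) = 0) ∧
  (∀ ξ ∈ Ioo κ η, deriv (deriv K) ξ + deriv K ξ + cL * (deriv K ξ + K ξ) = 0) ∧
  K κ = 1 ∧ derivWithin K (Ici κ) κ = 0 ∧ K η = γ ∧
  Tendsto (fun ξ => exp ξ * K ξ) atTop (nhds 1)


noncomputable section
namespace TW

def fm (c s : ℝ) : ℝ := (exp (-(c*s)) - c * exp (-s)) / (1-c)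
def fm' (c s : ℝ) : ℝ := (c * exp (-s) - c * exp (-(c*s))) / (1-c)
def fm'' (c s : ℝ) : ℝ := (c*c*exp (-(c*s)) - c * exp (-s)) / (1-c)

def gt (a c η ξ : ℝ) : ℝ := exp (-ξ) - a * exp (-(c*(ξ-η)))
def gt' (a c η ξ : ℝ) : ℝ := -exp (-ξ) + a*c*exp (-(c*(ξ-η)))
def gt'' (a c η ξ : ℝ) : ℝ := exp (-ξ) - a*c*c*exp (-(c*(ξ-η)))

lemma hasDerivAt_exp_affine (a b ξ : ℝ) :
    HasDerivAt (fun x : ℝ => exp (a*x+b)) (a * exp (a*ξ+b)) ξ := by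
  have h : HasDerivAt (fun x : ℝ => a*x+b) a ξ := by
    simpa using ((hasDerivAt_id ξ).const_mul a).add_const b
  simpa [mul_comm] using h.exp

lemma hasDerivAt_fm (c k ξ : ℝ) :
    HasDerivAt (fun x => fm c (x-k)) (fm' c (ξ-k)) ξ := by
  unfold fm fm'
  have h1 := hasDerivAt_exp_affine (-c) (c*k) ξ
  have h2 := hasDerivAt_exp_affine (-1) k ξ
  have h := ((h1.sub (h2.const_mul c)).div_const (1-c))
  refine HasDerivAt.congr_deriv (h.congr_of_eventuallyEq (Eventually.of_forall fun x => ?_)) ?_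
  · simp only [Pi.sub_apply, Pi.add_apply, Pi.neg_apply]; ring_nf
  · ring_nf

lemma hasDerivAt_fm' (c k ξ : ℝ) :
    HasDerivAt (fun x => fm' c (x-k)) (fm'' c (ξ-k)) ξ := by
  unfold fm' fm''
  have h1 := hasDerivAt_exp_affine (-c) (c*k) ξ
  have h2 := hasDerivAt_exp_affine (-1) k ξ
  have h := (((h2.const_mul c).sub (h1.const_mul c)).div_const (1-c))
  refine HasDerivAt.congr_deriv (h.congr_of_eventuallyEq (Eventually.of_forall fun x => ?_)) ?_
  · simp only [Pi.sub_apply, Pi.add_apply, Pi.neg_apply]; ring_nf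
  · ring_nf

lemma hasDerivAt_gt (a c η ξ : ℝ) : HasDerivAt (gt a c η) (gt' a c η ξ) ξ := by
  unfold gt gt'
  have h1 := hasDerivAt_exp_affine (-1) 0 ξ
  have h2 := hasDerivAt_exp_affine (-c) (c*η) ξ
  have h := h1.sub (h2.const_mul a)
  refine HasDerivAt.congr_deriv (h.congr_of_eventuallyEq (Eventually.of_forall fun x => ?_)) ?_
  · simp only [Pi.sub_apply, Pi.add_apply, Pi.neg_apply]; ring_nf
  · ring_nf

lemma hasDerivAt_gt' (a c η ξ : ℝ) : HasDerivAt (gt' a c η) (gt'' a c η ξ) ξ := by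
  unfold gt' gt''
  have h1 := hasDerivAt_exp_affine (-1) 0 ξ
  have h2 := hasDerivAt_exp_affine (-c) (c*η) ξ
  have h := h1.neg.add ((h2.const_mul c).const_mul a)
  refine HasDerivAt.congr_deriv (h.congr_of_eventuallyEq (Eventually.of_forall fun x => ?_)) ?_
  · simp only [Pi.sub_apply, Pi.add_apply, Pi.neg_apply]; ring_nf
  · ring_nf

lemma hasDerivAt_fm0 (c s : ℝ) : HasDerivAt (fm c) (fm' c s) s := by
  have := hasDerivAt_fm c 0 s
  simpa using this

lemma continuous_fm (c : ℝ) : Continuous (fm c) := by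
  unfold fm; apply Continuous.div_const; fun_prop

lemma contDiff_fm_shift (c k : ℝ) : ContDiff ℝ (⊤ : ℕ∞) (fun x => fm c (x-k)) := by
  unfold fm; apply ContDiff.div_const; fun_prop

lemma continuous_fm'_shift (c k : ℝ) : Continuous (fun x => fm' c (x-k)) := by
  unfold fm'; apply Continuous.div_const; fun_prop

lemma contDiff_gt (a c η : ℝ) : ContDiff ℝ (⊤ : ℕ∞) (gt a c η) := by
  unfold gt; fun_prop

lemma continuous_gt' (a c η : ℝ) : Continuous (gt' a c η) := by
  unfold gt'; fun_prop

lemma constOn {u : ℝ → ℝ} {A B : ℝ} (hc : ContinuousOn u (Icc A B))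
    (hd : ∀ x ∈ Ioo A B, HasDerivAt u 0 x) : ∀ x ∈ Icc A B, u x = u A := by
  intro x hx
  rcases eq_or_lt_of_le hx.1 with h | h
  · rw [← h]
  · have hcc : ContinuousOn u (Icc A x) := hc.mono (Icc_subset_Icc_right hx.2)
    have hdd : ∀ y ∈ Ioo A x, HasDerivAt u ((fun _ => (0:ℝ)) y) y :=
      fun y hy => hd y ⟨hy.1, lt_of_lt_of_le hy.2 hx.2⟩
    obtain ⟨c, -, hcslope⟩ := exists_hasDerivAt_eq_slope u (fun _ => 0) h hcc hdd
    have hxA : x - A ≠ 0 := sub_ne_zero.mpr (ne_of_gt h)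
    field_simp [hxA] at hcslope
    linarith

lemma glue_hasDerivAt {g h g' h' : ℝ → ℝ} {η : ℝ}
    (hg : ∀ x, HasDerivAt g (g' x) x) (hh : ∀ x, HasDerivAt h (h' x) x)
    (hv : g η = h η) (hd : g' η = h' η) (x : ℝ) :
    HasDerivAt (fun ξ => if ξ ≤ η then g ξ else h ξ)
      (if x ≤ η then g' x else h' x) x := by
  set f := fun ξ => if ξ ≤ η then g ξ else h ξ with hf
  rcases lt_trichotomy x η with hx | hx | hx
  · rw [if_pos hx.le]
    refine (hg x).congr_of_eventuallyEq ?_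
    filter_upwards [Iio_mem_nhds hx] with y hy
    simp [hf, (mem_Iio.mp hy).le]
  · subst hx
    rw [if_pos le_rfl]
    have h1 : HasDerivWithinAt f (g' x) (Iic x) x := by
      refine ((hg x).hasDerivWithinAt).congr (fun y hy => ?_) ?_
      · simp [hf, (mem_Iic.mp hy)]
      · simp [hf]
    have h2 : HasDerivWithinAt f (g' x) (Ici x) x := by
      rw [hd]
      refine ((hh x).hasDerivWithinAt).congr (fun y hy => ?_) ?_
      · rcases eq_or_lt_of_le (mem_Ici.mp hy) with h | h
        · simp [hf, ← h, hv]
        · simp [hf, not_le.mpr h]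
      · simp [hf, hv]
    have h3 := h1.union h2
    rw [Iic_union_Ici] at h3
    exact hasDerivWithinAt_univ.mp h3
  · rw [if_neg (not_le.mpr hx)]
    refine (hh x).congr_of_eventuallyEq ?_
    filter_upwards [Ioi_mem_nhds hx] with y hy
    simp [hf, not_le.mpr (mem_Ioi.mp hy)]

variable {cL cH γ : ℝ}

lemma fm_zero (hcL1 : cL < 1) : fm cL 0 = 1 := by
  have h : (1:ℝ) - cL ≠ 0 := by linarith
  unfold fm
  rw [mul_zero, neg_zero, exp_zero]
  field_simp

lemma fm_anti (hc0 : 0 < cL) (hc1 : cL < 1) : StrictAntiOn (fm cL) (Ici 0) := by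
  apply strictAntiOn_of_deriv_neg (convex_Ici 0) (continuous_fm cL).continuousOn
  intro x hx
  rw [interior_Ici] at hx
  rw [(hasDerivAt_fm0 cL x).deriv]
  unfold fm'
  apply div_neg_of_neg_of_pos
  · have : exp (-x) < exp (-(cL*x)) := by
      apply exp_lt_exp.mpr; nlinarith [mem_Ioi.mp hx]
    nlinarith
  · linarith

lemma fm_tendsto (hc0 : 0 < cL) : Tendsto (fm cL) atTop (nhds 0) := by
  unfold fm
  have h1 : Tendsto (fun s : ℝ => exp (-(cL*s))) atTop (nhds 0) := by
    apply tendsto_exp_atBot.comp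
    exact tendsto_neg_atTop_atBot.comp (tendsto_id.const_mul_atTop hc0)
  have h2 : Tendsto (fun s : ℝ => exp (-s)) atTop (nhds 0) :=
    tendsto_exp_atBot.comp tendsto_neg_atTop_atBot
  have := (h1.sub (h2.const_mul cL)).div_const (1-cL)
  simpa using this

lemma exists_root (hc0 : 0 < cL) (hc1 : cL < 1) (hγ0 : 0 < γ) (hγ1 : γ < 1) :
    ∃ t, 0 < t ∧ fm cL t = γ := by
  have hev : ∀ᶠ s in atTop, fm cL s < γ :=
    (fm_tendsto hc0).eventually_lt_const hγ0
  obtain ⟨M, hM1, hM2⟩ := (hev.and (eventually_ge_atTop (1:ℝ))).exists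
  have h0M : (0:ℝ) ≤ M := by linarith
  have hmem : γ ∈ Icc (fm cL M) (fm cL 0) := by
    constructor
    · exact hM1.le
    · rw [fm_zero hc1]; exact hγ1.le
  obtain ⟨t, ht, hfmt⟩ := intermediate_value_Icc' h0M (continuous_fm cL).continuousOn hmem
  refine ⟨t, ?_, hfmt⟩
  rcases eq_or_lt_of_le ht.1 with h | h
  · exfalso; rw [← h, fm_zero hc1] at hfmt; linarith
  · exact h


variable {cL cH γ : ℝ}

lemma exists_tw (hcL0 : 0 < cL) (hcL1 : cL < 1) (hcH : 1 < cH)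
    {t η κ : ℝ} (ht0 : 0 < t) (htγ : fm cL t = γ)
    (hη : exp (-η) = γ + exp (-(cL*t))/(cH-1)) (hκ : κ = η - t) :
    IsTravelingWave cL cH γ
      (fun ξ => if ξ ≤ η then fm cL (ξ-κ) else gt (exp (-(cL*t))/(cH-1)) cH η ξ) η κ := by
  have hcH1 : (0:ℝ) < cH - 1 := by linarith
  have h1cL : (1:ℝ) - cL ≠ 0 := by linarith
  have hγeq : exp (-(cL*t)) - cL*exp (-t) = γ*(1-cL) := by
    have h := htγ; unfold fm at h; field_simp [h1cL] at h; linarith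
  have hηκt : η - κ = t := by rw [hκ]; ring
  set a := exp (-(cL*t))/(cH-1) with ha
  set K := fun ξ => if ξ ≤ η then fm cL (ξ-κ) else gt a cH η ξ with hK
  set D := fun ξ => if ξ ≤ η then fm' cL (ξ-κ) else gt' a cH η ξ with hD
  have hval : fm cL (η - κ) = gt a cH η η := by
    rw [hηκt, htγ]; unfold gt
    rw [sub_self, mul_zero, neg_zero, exp_zero, mul_one, hη]; ring
  have hder : fm' cL (η - κ) = gt' a cH η η := by
    rw [hηκt]; unfold fm' gt'
    rw [sub_self, mul_zero, neg_zero, exp_zero, mul_one, hη, ha]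
    field_simp
    linear_combination (1 - cH) * hγeq
  have hKD : ∀ x, HasDerivAt K (D x) x :=
    fun x => glue_hasDerivAt (hasDerivAt_fm cL κ) (hasDerivAt_gt a cH η) hval hder x
  have hderivK : deriv K = D := funext fun x => (hKD x).deriv
  have hDcont : Continuous D := by
    refine Continuous.if_le (continuous_fm'_shift cL κ) (continuous_gt' a cH η)
      continuous_id continuous_const (fun x hx => ?_)
    subst hx; exact hder
  have hκη : κ < η := by rw [hκ]; linarith
  refine ⟨hκη, ?_, ?_, ?_, ?_, ?_, ?_, ?_, ?_, ?_⟩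
  · exact (contDiff_one_iff_deriv.mpr
      ⟨fun x => (hKD x).differentiableAt, hderivK ▸ hDcont⟩).contDiffOn
  · exact ((contDiff_fm_shift cL κ).contDiffOn).congr (fun ξ hξ => if_pos hξ.2)
  · refine ((contDiff_gt a cH η).contDiffOn).congr (fun ξ hξ => ?_)
    rcases eq_or_lt_of_le (mem_Ici.mp hξ) with h | h
    · show (if ξ ≤ η then fm cL (ξ-κ) else gt a cH η ξ) = gt a cH η ξ
      rw [← h, if_pos le_rfl, hval]
    · exact if_neg (not_le.mpr h)
  · intro ξ hξ
    have hξη := mem_Ioi.mp hξ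
    have hD2 : HasDerivAt D (gt'' a cH η ξ) ξ := by
      refine (hasDerivAt_gt' a cH η ξ).congr_of_eventuallyEq ?_
      filter_upwards [Ioi_mem_nhds hξη] with y hy
      exact if_neg (not_le.mpr (mem_Ioi.mp hy))
    have hDξ : D ξ = gt' a cH η ξ := if_neg (not_le.mpr hξη)
    have hKξ : K ξ = gt a cH η ξ := if_neg (not_le.mpr hξη)
    rw [hderivK, hD2.deriv, hDξ, hKξ]
    unfold gt gt' gt''; ring
  · intro ξ hξ
    have hξη := hξ.2
    have hD2 : HasDerivAt D (fm'' cL (ξ-κ)) ξ := by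
      refine (hasDerivAt_fm' cL κ ξ).congr_of_eventuallyEq ?_
      filter_upwards [Iio_mem_nhds hξη] with y hy
      exact if_pos (mem_Iio.mp hy).le
    have hDξ : D ξ = fm' cL (ξ-κ) := if_pos hξη.le
    have hKξ : K ξ = fm cL (ξ-κ) := if_pos hξη.le
    rw [hderivK, hD2.deriv, hDξ, hKξ]
    unfold fm fm' fm''; field_simp; ring
  · show (if κ ≤ η then fm cL (κ-κ) else gt a cH η κ) = 1
    rw [if_pos hκη.le, sub_self, fm_zero hcL1]
  · have h0 : HasDerivWithinAt K (D κ) (Ici κ) κ := (hKD κ).hasDerivWithinAt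
    rw [h0.derivWithin (uniqueDiffOn_Ici κ κ self_mem_Ici)]
    show (if κ ≤ η then fm' cL (κ-κ) else gt' a cH η κ) = 0
    rw [if_pos hκη.le, sub_self]
    unfold fm'
    rw [mul_zero, neg_zero, exp_zero]
    ring
  · show (if η ≤ η then fm cL (η-κ) else gt a cH η η) = γ
    rw [if_pos le_rfl, hηκt, htγ]
  · have htend : Tendsto (fun ξ : ℝ => 1 - a*exp ((1-cH)*ξ + cH*η)) atTop (nhds 1) := by
      have h1 : Tendsto (fun ξ : ℝ => exp ((1-cH)*ξ + cH*η)) atTop (nhds 0) := by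
        apply tendsto_exp_atBot.comp
        apply Filter.tendsto_atBot_add_const_right
        have : Tendsto (fun ξ : ℝ => (cH-1)*ξ) atTop atTop :=
          tendsto_id.const_mul_atTop hcH1
        have h2 := tendsto_neg_atTop_atBot.comp this
        refine h2.congr (fun x => by simp; ring)
      have := (h1.const_mul a).neg.const_add 1
      simpa [sub_eq_add_neg] using this
    refine Tendsto.congr' ?_ htend
    filter_upwards [eventually_gt_atTop η] with ξ hξ
    show 1 - a*exp ((1-cH)*ξ + cH*η) = exp ξ * K ξ
    have hKξ : K ξ = gt a cH η ξ := if_neg (not_le.mpr hξ)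
    rw [hKξ]
    unfold gt
    rw [mul_sub, ← exp_add, ← mul_assoc, mul_comm (exp ξ) a, mul_assoc, ← exp_add]
    rw [show ξ + -ξ = 0 by ring, exp_zero, show ξ + -(cH*(ξ-η)) = (1-cH)*ξ + cH*η by ring]

lemma hasDerivAt_exp_mul (a ξ : ℝ) : HasDerivAt (fun x : ℝ => exp (a*x)) (a * exp (a*ξ)) ξ := by
  simpa using hasDerivAt_exp_affine a 0 ξ

lemma tw_char (hcL1 : cL < 1) (hcH : 1 < cH) {K : ℝ → ℝ} {η κ : ℝ}
    (hK : IsTravelingWave cL cH γ K η κ) :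
    fm cL (η - κ) = γ ∧ exp (-η) = γ + exp (-(cL*(η-κ)))/(cH-1) ∧
    (∀ ξ ∈ Icc κ η, K ξ = fm cL (ξ - κ)) ∧
    (∀ ξ ∈ Ici η, K ξ = gt (exp (-(cL*(η-κ)))/(cH-1)) cH η ξ) := by
  obtain ⟨hκη, hC1, hCm, hCt, hodeH, hodeL, hKκ, hD0, hKη, hlim⟩ := hK
  have hcH1 : (0:ℝ) < cH - 1 := by linarith
  have h1cH : (1:ℝ) - cH ≠ 0 := by linarith
  have h1cL : (1:ℝ) - cL ≠ 0 := by linarith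
  set D := derivWithin K (Ici κ) with hDdef
  have hKcont : ContinuousOn K (Ici κ) := hC1.continuousOn
  have hDcont : ContinuousOn D (Ici κ) :=
    hC1.continuousOn_derivWithin (uniqueDiffOn_Ici κ) le_rfl
  have hKd : ∀ x, κ < x → HasDerivAt K (D x) x := by
    intro x hx
    have hnh : Ici κ ∈ nhds x := Ici_mem_nhds hx
    have hdiff : DifferentiableAt ℝ K x :=
      ((hC1.differentiableOn one_ne_zero) x (le_of_lt hx)).differentiableAt hnh
    rw [hDdef, derivWithin_of_mem_nhds hnh]
    exact hdiff.hasDerivAt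
  have hDK : ∀ x, κ < x → D x = deriv K x := fun x hx =>
    derivWithin_of_mem_nhds (Ici_mem_nhds hx)
  have h2T : ∀ x ∈ Ioi η, HasDerivAt (deriv K) (deriv (deriv K) x) x := by
    intro x hx
    have hCo : ContDiffOn ℝ (⊤ : ℕ∞) (deriv K) (Ioi η) :=
      (hCt.mono Ioi_subset_Ici_self).deriv_of_isOpen isOpen_Ioi (by simp)
    exact ((hCo.differentiableOn (by simp) x hx).differentiableAt (Ioi_mem_nhds hx)).hasDerivAt
  have h2M : ∀ x ∈ Ioo κ η, HasDerivAt (deriv K) (deriv (deriv K) x) x := by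
    intro x hx
    have hCo : ContDiffOn ℝ (⊤ : ℕ∞) (deriv K) (Ioo κ η) :=
      (hCm.mono Ioo_subset_Icc_self).deriv_of_isOpen isOpen_Ioo (by simp)
    exact ((hCo.differentiableOn (by simp) x hx).differentiableAt
      (isOpen_Ioo.mem_nhds hx)).hasDerivAt
  -- tail W equation
  have hgT : ∀ x, η < x → HasDerivAt (fun y => exp (cH*y) * (D y + K y)) 0 x := by
    intro x hx
    have hxκ : κ < x := lt_trans hκη hx
    have hKx : HasDerivAt K (deriv K x) x := by rw [← hDK x hxκ]; exact hKd x hxκ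
    have hmain := (hasDerivAt_exp_mul cH x).mul ((h2T x hx).add hKx)
    have heq : (fun y => exp (cH*y) * (D y + K y))
        =ᶠ[nhds x] (fun y => exp (cH*y) * (deriv K y + K y)) := by
      filter_upwards [Ioi_mem_nhds hxκ] with y hy
      rw [hDK y hy]
    refine HasDerivAt.congr_of_eventuallyEq ?_ heq
    have h0 : (0:ℝ) = cH * exp (cH*x) * (deriv K x + K x)
        + exp (cH*x) * (deriv (deriv K) x + deriv K x) := by
      have hode := hodeH x hx
      linear_combination (-(exp (cH*x))) * hode
    rw [h0]; exact hmain
  have hWT : ∀ ξ ∈ Ici η, exp (cH*ξ) * (D ξ + K ξ) = exp (cH*η) * (D η + K η) := by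
    intro ξ hξ
    rcases eq_or_lt_of_le (mem_Ici.mp hξ) with h | h
    · rw [← h]
    · have hsub : Icc η ξ ⊆ Ici κ := fun y hy => le_trans hκη.le hy.1
      refine constOn (u := fun y => exp (cH*y) * (D y + K y)) (A := η) (B := ξ)
        ?_ ?_ ξ (right_mem_Icc.mpr h.le)
      · exact ((by fun_prop : Continuous fun y : ℝ => exp (cH*y)).continuousOn).mul
          ((hDcont.mono hsub).add (hKcont.mono hsub))
      · exact fun x hx => hgT x hx.1
  -- middle W equation
  have hgM : ∀ x ∈ Ioo κ η, HasDerivAt (fun y => exp (cL*y) * (D y + K y)) 0 x := by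
    intro x hx
    have hxκ : κ < x := hx.1
    have hKx : HasDerivAt K (deriv K x) x := by rw [← hDK x hxκ]; exact hKd x hxκ
    have hmain := (hasDerivAt_exp_mul cL x).mul ((h2M x hx).add hKx)
    have heq : (fun y => exp (cL*y) * (D y + K y))
        =ᶠ[nhds x] (fun y => exp (cL*y) * (deriv K y + K y)) := by
      filter_upwards [Ioi_mem_nhds hxκ] with y hy
      rw [hDK y hy]
    refine HasDerivAt.congr_of_eventuallyEq ?_ heq
    have h0 : (0:ℝ) = cL * exp (cL*x) * (deriv K x + K x)
        + exp (cL*x) * (deriv (deriv K) x + deriv K x) := by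
      have hode := hodeL x hx
      linear_combination (-(exp (cL*x))) * hode
    rw [h0]; exact hmain
  have hWL : ∀ ξ ∈ Icc κ η, exp (cL*ξ) * (D ξ + K ξ) = exp (cL*κ) := by
    intro ξ hξ
    have hsub : Icc κ η ⊆ Ici κ := fun y hy => hy.1
    have h := constOn (u := fun y => exp (cL*y) * (D y + K y)) (A := κ) (B := η)
      (((by fun_prop : Continuous fun y : ℝ => exp (cL*y)).continuousOn).mul
        ((hDcont.mono hsub).add (hKcont.mono hsub))) hgM ξ hξ
    rw [h, hKκ, hD0]
    ring
  -- middle profile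
  have hψ : ∀ ξ ∈ Icc κ η,
      (1-cL)*(exp ξ * K ξ) - exp (cL*κ) * exp ((1-cL)*ξ)
        = (1-cL)*(exp κ * K κ) - exp (cL*κ) * exp ((1-cL)*κ) := by
    have hsub : Icc κ η ⊆ Ici κ := fun y hy => hy.1
    refine constOn ?_ ?_
    · apply ContinuousOn.sub
      · exact ((continuous_exp.continuousOn.mul (hKcont.mono hsub)).const_smul (1-cL)).congr
          (fun y _ => by simp [smul_eq_mul])
      · fun_prop
    · intro x hx
      have h1 : HasDerivAt (fun y => exp y * K y) (exp x * K x + exp x * D x) x :=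
        (Real.hasDerivAt_exp x).mul (hKd x hx.1)
      have h2 := (hasDerivAt_exp_mul (1-cL) x).const_mul (exp (cL*κ))
      have hcomb := (h1.const_mul (1-cL)).sub h2
      have e1 : exp ((1-cL)*x) * exp (cL*x) = exp x := by
        rw [← exp_add, show (1-cL)*x + cL*x = x by ring]
      have hWLx := hWL x (Ioo_subset_Icc_self hx)
      have h0 : (0:ℝ) = (1-cL) * (exp x * K x + exp x * D x)
          - exp (cL*κ) * ((1-cL) * exp ((1-cL)*x)) := by
        linear_combination (1-cL)*(D x + K x)*e1 - (1-cL)*exp ((1-cL)*x)*hWLx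
      rw [h0]; exact hcomb
  have hmid : ∀ ξ ∈ Icc κ η, K ξ = fm cL (ξ - κ) := by
    intro ξ hξ
    have hψξ := hψ ξ hξ
    rw [hKκ, mul_one] at hψξ
    have e2 : exp (cL*κ) * exp ((1-cL)*ξ) = exp ξ * exp (-(cL*(ξ-κ))) := by
      rw [← exp_add, ← exp_add]; congr 1; ring
    have e3 : exp (cL*κ) * exp ((1-cL)*κ) = exp κ := by
      rw [← exp_add]; congr 1; ring
    have e4 : exp ξ * exp (-(ξ-κ)) = exp κ := by
      rw [← exp_add]; congr 1; ring
    have hexp : exp ξ ≠ 0 := exp_ne_zero ξ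
    unfold fm
    rw [eq_div_iff h1cL]
    apply mul_left_cancel₀ hexp
    linear_combination hψξ + e2 - e3 + cL*e4
  have hfmη : fm cL (η - κ) = γ := by
    rw [← hmid η ⟨hκη.le, le_rfl⟩, hKη]
  have hWη : D η + K η = exp (-(cL*(η-κ))) := by
    have h := hWL η ⟨hκη.le, le_rfl⟩
    have e : exp (-(cL*(η-κ))) * exp (cL*η) = exp (cL*κ) := by
      rw [← exp_add]; congr 1; ring
    apply mul_left_cancel₀ (exp_ne_zero (cL*η))
    linear_combination h - e
  -- tail profile
  have hφ : ∀ ξ ∈ Ici η,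
      (1-cH)*(exp ξ * K ξ) - (D η + K η) * exp (cH*η) * exp ((1-cH)*ξ)
        = (1-cH)*(exp η * K η) - (D η + K η) * exp (cH*η) * exp ((1-cH)*η) := by
    intro ξ hξ
    rcases eq_or_lt_of_le (mem_Ici.mp hξ) with h | h
    · rw [← h]
    · have hsub : Icc η ξ ⊆ Ici κ := fun y hy => le_trans hκη.le hy.1
      refine constOn (u := fun y => (1-cH)*(exp y * K y) - (D η + K η) * exp (cH*η) * exp ((1-cH)*y))
        (A := η) (B := ξ) ?_ ?_ ξ (right_mem_Icc.mpr h.le)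
      · apply ContinuousOn.sub
        · exact ((continuous_exp.continuousOn.mul (hKcont.mono hsub)).const_smul (1-cH)).congr
            (fun y _ => by simp [smul_eq_mul])
        · fun_prop
      · intro x hx
        have hxκ : κ < x := lt_trans hκη hx.1
        have h1 : HasDerivAt (fun y => exp y * K y) (exp x * K x + exp x * D x) x :=
          (Real.hasDerivAt_exp x).mul (hKd x hxκ)
        have h2 := (hasDerivAt_exp_mul (1-cH) x).const_mul ((D η + K η) * exp (cH*η))
        have hcomb := (h1.const_mul (1-cH)).sub h2
        have e5 : exp ((1-cH)*x) * exp (cH*x) = exp x := by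
          rw [← exp_add, show (1-cH)*x + cH*x = x by ring]
        have hWTx := hWT x (mem_Ici.mpr hx.1.le)
        have h0 : (0:ℝ) = (1-cH) * (exp x * K x + exp x * D x)
            - (D η + K η) * exp (cH*η) * ((1-cH) * exp ((1-cH)*x)) := by
          linear_combination (1-cH)*(D x + K x)*e5 - (1-cH)*exp ((1-cH)*x)*hWTx
        rw [h0]; exact hcomb
  -- the limit pins down φ η
  have hφη : (1-cH)*(exp η * K η) - (D η + K η) * exp (cH*η) * exp ((1-cH)*η)
      = 1 - cH := by
    set C := (1-cH)*(exp η * K η) - (D η + K η) * exp (cH*η) * exp ((1-cH)*η) with hC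
    have hexp0 : Tendsto (fun ξ : ℝ => exp ((1-cH)*ξ)) atTop (nhds 0) := by
      apply tendsto_exp_atBot.comp
      have : Tendsto (fun ξ : ℝ => (cH-1)*ξ) atTop atTop :=
        tendsto_id.const_mul_atTop hcH1
      exact (tendsto_neg_atTop_atBot.comp this).congr (fun x => by simp; ring)
    have htend2 : Tendsto
        (fun ξ => (C + (D η + K η) * exp (cH*η) * exp ((1-cH)*ξ))/(1-cH))
        atTop (nhds (C/(1-cH))) := by
      have := ((hexp0.const_mul ((D η + K η) * exp (cH*η))).const_add C).div_const (1-cH)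
      simpa using this
    have htend3 : Tendsto (fun ξ => exp ξ * K ξ) atTop (nhds (C/(1-cH))) := by
      refine htend2.congr' ?_
      filter_upwards [eventually_ge_atTop η] with ξ hξ
      have hφξ := hφ ξ (mem_Ici.mpr hξ)
      field_simp
      linear_combination -hφξ
    have huniq := tendsto_nhds_unique htend3 hlim
    field_simp at huniq
    linarith [huniq]
  refine ⟨hfmη, ?_, hmid, ?_⟩
  · have e6 : exp (cH*η) * exp ((1-cH)*η) = exp η := by
      rw [← exp_add]; congr 1; ring
    have e7 : exp (-η) * exp η = 1 := by rw [← exp_add]; simp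
    rw [hWη, hKη] at hφη
    field_simp
    apply mul_left_cancel₀ (exp_ne_zero η)
    linear_combination (cH-1)*e7 + hφη + exp (-(cL*(η-κ)))*e6
  · intro ξ hξ
    have hφξ := hφ ξ hξ
    rw [hφη, hWη] at hφξ
    have e8 : exp (cH*η) * exp ((1-cH)*ξ) = exp ξ * exp (-(cH*(ξ-η))) := by
      rw [← exp_add, ← exp_add]; congr 1; ring
    have e9 : exp ξ * exp (-ξ) = 1 := by rw [← exp_add]; simp
    have step : (cH-1) * (exp ξ * K ξ)
        = (cH-1) - exp (-(cL*(η-κ))) * (exp ξ * exp (-(cH*(ξ-η)))) := by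
      linear_combination -hφξ - exp (-(cL*(η-κ))) * e8
    unfold gt
    field_simp
    apply mul_left_cancel₀ (exp_ne_zero ξ)
    linear_combination step - (cH-1)*e9

end TW
end

theorem traveling_wave_exists_unique (cL cH γ : ℝ)
    (hcL0 : 0 < cL) (hcL1 : cL < 1) (hcH : 1 < cH) (hγ0 : 0 < γ) (hγ1 : γ < 1) :
    (∃ (K : ℝ → ℝ) (η κ : ℝ), IsTravelingWave cL cH γ K η κ) ∧
    (∀ (K₁ K₂ : ℝ → ℝ) (η₁ κ₁ η₂ κ₂ : ℝ),
      IsTravelingWave cL cH γ K₁ η₁ κ₁ → IsTravelingWave cL cH γ K₂ η₂ κ₂ →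
      η₁ = η₂ ∧ κ₁ = κ₂ ∧ EqOn K₁ K₂ (Ici κ₁)) := by
  obtain ⟨t, ht0, htγ⟩ := TW.exists_root hcL0 hcL1 hγ0 hγ1
  constructor
  · have hpos : 0 < γ + exp (-(cL*t))/(cH-1) := by
      have := div_pos (exp_pos (-(cL*t))) (by linarith : (0:ℝ) < cH - 1)
      linarith
    refine ⟨_, -Real.log (γ + exp (-(cL*t))/(cH-1)),
      -Real.log (γ + exp (-(cL*t))/(cH-1)) - t,
      TW.exists_tw hcL0 hcL1 hcH ht0 htγ ?_ rfl⟩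
    rw [neg_neg, exp_log hpos]
  · intro K₁ K₂ η₁ κ₁ η₂ κ₂ h1 h2
    obtain ⟨hf1, he1, hm1, ht1⟩ := TW.tw_char hcL1 hcH h1
    obtain ⟨hf2, he2, hm2, ht2⟩ := TW.tw_char hcL1 hcH h2
    have hκη1 : κ₁ < η₁ := h1.1
    have hκη2 : κ₂ < η₂ := h2.1
    have hd : η₁ - κ₁ = η₂ - κ₂ := by
      refine (TW.fm_anti hcL0 hcL1).injOn ?_ ?_ (hf1.trans hf2.symm)
      · exact mem_Ici.mpr (by linarith)
      · exact mem_Ici.mpr (by linarith)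
    have hηe : η₁ = η₂ := by
      have hee : exp (-η₁) = exp (-η₂) := by rw [he1, he2, hd]
      have := Real.exp_injective hee
      linarith
    have hκe : κ₁ = κ₂ := by linarith
    subst hηe; subst hκe
    refine ⟨rfl, rfl, ?_⟩
    intro ξ hξ
    rcases le_or_gt ξ η₁ with h | h
    · rw [hm1 ξ ⟨mem_Ici.mp hξ, h⟩, hm2 ξ ⟨mem_Ici.mp hξ, h⟩]
    · rw [ht1 ξ (mem_Ici.mpr h.le), ht2 ξ (mem_Ici.mpr h.le)]
end

section
/- For the traveling wave K of the model (with 0 < c_L < 1 < c_H, γ ∈ (0,1)), one has γ < K(ξ) < 1 for ξ ∈ (κ*, η*) and 0 < K(ξ) < γ for ξ > η*. -/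
open Real Set

/-!
Both pieces of `K` are, in the shifted variable `t ≥ 0`, of the form `p e^{-a t} - q e^{-b t}`
with `a < b` and `q b ≤ p a`, so they are strictly decreasing; the bounds are then their values at
the endpoints `K(κ) = 1`, `K(η) = γ`. On `[κ, η]`, `a = c_L`, `b = 1` and `q b = p a`.
Beyond `η`, `p = e^{-η}` and `q = e^{-η} - γ`, and the condition `c_H q < e^{-η}` is equivalent to
`e^{-c_L (η - κ)} < γ = Ψ(η - κ)`, which holds because `Ψ(t) - e^{-c_L t}` is a positive multiple
of `e^{-c_L t} - e^{-t}`. Positivity beyond `η` comes from `0 < q < p`.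
-/

section ExpDifference

variable {a b p q : ℝ}

lemma hasDerivAt_mul_exp_sub_mul_exp (t : ℝ) :
    HasDerivAt (fun s => p * exp (-a * s) - q * exp (-b * s))
      (q * b * exp (-b * t) - p * a * exp (-a * t)) t := by
  have hexp (c : ℝ) : HasDerivAt (fun s => exp (-c * s)) (-c * exp (-c * t)) t := by
    simpa [mul_comm] using ((hasDerivAt_id t).const_mul (-c)).exp
  exact (((hexp a).const_mul p).sub ((hexp b).const_mul q)).congr_deriv (by ring)

lemma strictAntiOn_mul_exp_sub_mul_exp (hab : a < b) (hpa : 0 < p * a) (hqb : q * b ≤ p * a) :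
    StrictAntiOn (fun t => p * exp (-a * t) - q * exp (-b * t)) (Ici 0) := by
  refine strictAntiOn_of_deriv_neg (convex_Ici 0) (by fun_prop) fun t ht => ?_
  rw [interior_Ici, mem_Ioi] at ht
  rw [hasDerivAt_mul_exp_sub_mul_exp t |>.deriv]
  have hexp : exp (-b * t) < exp (-a * t) := exp_lt_exp.mpr (by nlinarith)
  nlinarith [mul_le_mul_of_nonneg_right hqb (exp_pos (-b * t)).le]

lemma mul_exp_sub_mul_exp_pos (hab : a ≤ b) (hq : 0 ≤ q) (hqp : q < p) {t : ℝ} (ht : 0 ≤ t) :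
    0 < p * exp (-a * t) - q * exp (-b * t) := by
  have hexp : exp (-b * t) ≤ exp (-a * t) := exp_le_exp.mpr (by nlinarith)
  nlinarith [mul_le_mul_of_nonneg_left hexp hq, exp_pos (-a * t)]

end ExpDifference

lemma exp_neg_mul_lt_wave_profile {c t : ℝ} (hc0 : 0 < c) (hc1 : c < 1) (ht : 0 < t) :
    exp (-c * t) < -(c / (1 - c)) * exp (-t) + (1 / (1 - c)) * exp (-c * t) := by
  have hexp : exp (-t) < exp (-c * t) := exp_lt_exp.mpr (by nlinarith)
  have h1c : 0 < 1 - c := by linarith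
  rw [← sub_pos]
  have hdiff : -(c / (1 - c)) * exp (-t) + (1 / (1 - c)) * exp (-c * t) - exp (-c * t)
      = c / (1 - c) * (exp (-c * t) - exp (-t)) := by field_simp; ring
  rw [hdiff]
  exact mul_pos (div_pos hc0 h1c) (sub_pos.mpr hexp)

theorem traveling_wave_value_bounds_general (cL cH γ η κ : ℝ)
    (hcL0 : 0 < cL) (hcL1 : cL < 1) (hcH : 1 < cH) (hγ0 : 0 < γ)
    (Ψ : ℝ → ℝ)
    (hΨ : ∀ x, Ψ x = -(cL / (1 - cL)) * exp (-x) + (1 / (1 - cL)) * exp (-cL * x))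
    (hκη : κ < η) (hΨγ : Ψ (η - κ) = γ)
    (hη : exp (-η) = γ + (1 / (cH - 1)) * exp (-cL * (η - κ)))
    (K : ℝ → ℝ)
    (hKL : ∀ ξ ∈ Icc κ η,
      K ξ = -(cL / (1 - cL)) * exp (-(ξ - κ)) + (1 / (1 - cL)) * exp (-cL * (ξ - κ)))
    (hKH : ∀ ξ ∈ Ici η, K ξ = exp (-ξ) + (γ - exp (-η)) * exp (-cH * (ξ - η))) :
    (∀ ξ ∈ Ioo κ η, γ < K ξ ∧ K ξ < 1) ∧
    (∀ ξ ∈ Ioi η, 0 < K ξ ∧ K ξ < γ) := by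
  have hΨ_eq : Ψ = fun t => 1 / (1 - cL) * exp (-cL * t) - cL / (1 - cL) * exp (-1 * t) := by
    ext t; rw [hΨ, neg_one_mul]; ring
  have hcL_sub : 0 < 1 - cL := by linarith
  have hΨ_anti : StrictAntiOn Ψ (Ici 0) := hΨ_eq ▸
    strictAntiOn_mul_exp_sub_mul_exp hcL1 (by positivity) (le_of_eq (by ring))
  have hΨ_zero : Ψ 0 = 1 := by simp only [hΨ_eq, mul_zero, exp_zero, mul_one]; field_simp
  refine ⟨fun ξ ⟨hκξ, hξη⟩ => ?_, fun ξ hξ => ?_⟩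
  · have hK : K ξ = Ψ (ξ - κ) := by rw [hKL ξ ⟨hκξ.le, hξη.le⟩, hΨ]
    rw [hK, ← hΨγ, ← hΨ_zero]
    exact ⟨hΨ_anti (mem_Ici.mpr (by linarith)) (mem_Ici.mpr (by linarith)) (by linarith),
      hΨ_anti self_mem_Ici (mem_Ici.mpr (by linarith)) (by linarith)⟩
  set A := exp (-η) - γ with hA
  have hA_eq : (cH - 1) * A = exp (-cL * (η - κ)) := by
    rw [hA, hη]; field_simp [show cH - 1 ≠ 0 by linarith]; ring
  have hγ_gt : exp (-cL * (η - κ)) < γ := by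
    rw [← hΨγ, hΨ]; exact exp_neg_mul_lt_wave_profile hcL0 hcL1 (by linarith)
  have hA_pos : 0 < A := pos_of_mul_pos_right (hA_eq ▸ exp_pos _) (by linarith)
  have hK : K ξ = exp (-η) * exp (-1 * (ξ - η)) - A * exp (-cH * (ξ - η)) := by
    rw [hKH ξ (mem_Ici.mpr hξ.le), neg_one_mul, ← exp_add, hA]; ring_nf
  have hξη : 0 < ξ - η := sub_pos.mpr hξ
  refine ⟨hK ▸ mul_exp_sub_mul_exp_pos hcH.le hA_pos.le (by linarith) hξη.le, ?_⟩
  have hg_anti := strictAntiOn_mul_exp_sub_mul_exp (p := exp (-η)) (q := A) hcH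
    (by simpa using exp_pos (-η)) (by linarith)
  have hlt := hg_anti self_mem_Ici (mem_Ici.mpr hξη.le) hξη
  simp only [mul_zero, exp_zero, mul_one] at hlt
  linarith

theorem traveling_wave_value_bounds (cL cH γ η κ : ℝ)
    (hcL0 : 0 < cL) (hcL1 : cL < 1) (hcH : 1 < cH) (hγ0 : 0 < γ) (hγ1 : γ < 1)
    (Ψ : ℝ → ℝ)
    (hΨ : ∀ x, Ψ x = -(cL / (1 - cL)) * exp (-x) + (1 / (1 - cL)) * exp (-cL * x))
    (hκη : κ < η) (hΨγ : Ψ (η - κ) = γ)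
    (hη : exp (-η) = γ + (1 / (cH - 1)) * exp (-cL * (η - κ)))
    (K : ℝ → ℝ)
    (hKL : ∀ ξ ∈ Icc κ η,
      K ξ = -(cL / (1 - cL)) * exp (-(ξ - κ)) + (1 / (1 - cL)) * exp (-cL * (ξ - κ)))
    (hKH : ∀ ξ ∈ Ici η, K ξ = exp (-ξ) + (γ - exp (-η)) * exp (-cH * (ξ - η))) :
    (∀ ξ ∈ Ioo κ η, γ < K ξ ∧ K ξ < 1) ∧
    (∀ ξ ∈ Ioi η, 0 < K ξ ∧ K ξ < γ) :=
  traveling_wave_value_bounds_general cL cH γ η κ hcL0 hcL1 hcH hγ0 Ψ hΨ hκη hΨγ hη K hKL hKH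
end
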